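/- Let $0 < \beta < \gamma < 1$ and let $C_3, C_4, C_5 > 0$. Suppose $j(x) \le a_1 x^{-1/\gamma}$ for all $x>0$ and $\psi \ge C_3 z^{\beta}(C_4 z^{\beta-1} + C_5)^{\frac{\gamma-\beta}{\beta-1}}$ where $z = N/K > 0$. Then there exists a constant $b_7 > 0$ (depending on $a_1, C_3, C_4, C_5, \beta, \gamma$) such that $j(\psi)\cdot\frac{N}{K} \le b_7 + \left(\frac{N}{K}\right)^{1-\beta}$ for all $K, N > 0$. -/

import Mathlib

/-!
Write `z = N / K` and `θ = (γ - β) / (γ (1 - β))`. The lower bound on `ψ` gives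
`z ψ^(-1/γ) ≤ C₃^(-1/γ) z^(1 - β/γ) (C₄ z^(β-1) + C₅)^θ`, and since `0 < θ ≤ 1` the power `θ` is
subadditive, so the right side is at most `C₃^(-1/γ) (C₄^θ + C₅^θ z^(1 - β/γ))`: the exponents
cancel exactly in the first term. As `0 < 1 - β/γ < 1 - β`, Young's inequality absorbs the
intermediate power `z^(1 - β/γ)` into a constant plus `z^(1 - β)`.
-/

open Real

lemma mul_rpow_le_rpow_add_rpow {M z p q : ℝ} (hM : 0 ≤ M) (hz : 0 ≤ z) (hp : 0 < p)
    (hpq : p < q) : M * z ^ p ≤ M ^ (q / (q - p)) + z ^ q := by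
  have hqp : 0 < q - p := sub_pos.2 hpq
  have hconj : (q / (q - p)).HolderConjugate (q / p) := by
    rw [Real.holderConjugate_iff]
    refine ⟨(one_lt_div hqp).2 (by linarith), ?_⟩
    have : q ≠ 0 := by linarith
    field_simp
    ring
  calc M * z ^ p ≤ M ^ (q / (q - p)) / (q / (q - p)) + (z ^ p) ^ (q / p) / (q / p) :=
        young_inequality_of_nonneg hM (rpow_nonneg hz p) hconj
    _ ≤ M ^ (q / (q - p)) + z ^ q := by
        rw [← rpow_mul hz, mul_div_cancel₀ q hp.ne']
        gcongr
        · exact div_le_self (rpow_nonneg hM _) hconj.lt.le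
        · exact div_le_self (rpow_nonneg hz _) hconj.symm.lt.le

lemma mul_rpow_neg_inv_le {β γ C₃ C₄ C₅ z : ℝ} (hβ : 0 < β) (hβγ : β ≤ γ) (hγ : γ < 1)
    (hC₃ : 0 < C₃) (hC₄ : 0 < C₄) (hC₅ : 0 < C₅) (hz : 0 < z) :
    z * (C₃ * z ^ β * (C₄ * z ^ (β - 1) + C₅) ^ ((γ - β) / (β - 1))) ^ (-1 / γ) ≤
      C₃ ^ (-1 / γ) * (C₄ ^ ((γ - β) / (γ * (1 - β)))
        + C₅ ^ ((γ - β) / (γ * (1 - β))) * z ^ (1 - β / γ)) := by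
  have hγ0 : 0 < γ := hβ.trans_le hβγ
  have hβ1 : 0 < 1 - β := by linarith
  set θ := (γ - β) / (γ * (1 - β)) with hθ
  set Q := C₄ * z ^ (β - 1) + C₅
  have hQ : 0 < Q := by positivity
  have hθ0 : 0 ≤ θ := div_nonneg (by linarith) (by positivity)
  have hθ1 : θ ≤ 1 := by
    rw [div_le_one (by positivity)]
    nlinarith
  have hexpQ : (γ - β) / (β - 1) * (-1 / γ) = θ := by
    have : β - 1 ≠ 0 := by linarith
    rw [hθ]; field_simp; ring
  have hexpand : (C₃ * z ^ β * Q ^ ((γ - β) / (β - 1))) ^ (-1 / γ) =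
      C₃ ^ (-1 / γ) * z ^ (β * (-1 / γ)) * Q ^ θ := by
    rw [mul_rpow (by positivity) (by positivity), mul_rpow hC₃.le (by positivity),
      ← rpow_mul hz.le, ← rpow_mul hQ.le, hexpQ]
  have hsubadd : Q ^ θ ≤ C₄ ^ θ * z ^ ((β - 1) * θ) + C₅ ^ θ := by
    rw [rpow_mul hz.le, ← mul_rpow hC₄.le (by positivity)]
    exact rpow_add_le_add_rpow (by positivity) hC₅.le hθ0 hθ1
  have hexp₁ : 1 + β * (-1 / γ) + (β - 1) * θ = 0 := by
    rw [hθ]; field_simp; ring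
  have hexp₂ : 1 + β * (-1 / γ) = 1 - β / γ := by ring
  calc z * (C₃ * z ^ β * Q ^ ((γ - β) / (β - 1))) ^ (-1 / γ)
      = C₃ ^ (-1 / γ) * (z ^ (1 : ℝ) * z ^ (β * (-1 / γ)) * Q ^ θ) := by
        rw [hexpand, rpow_one]; ring
    _ ≤ C₃ ^ (-1 / γ) * (z ^ (1 : ℝ) * z ^ (β * (-1 / γ)) *
          (C₄ ^ θ * z ^ ((β - 1) * θ) + C₅ ^ θ)) := by gcongr
    _ = C₃ ^ (-1 / γ) * (C₄ ^ θ * z ^ (1 + β * (-1 / γ) + (β - 1) * θ)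
          + C₅ ^ θ * z ^ (1 + β * (-1 / γ))) := by
        rw [rpow_add hz, rpow_add hz]; ring
    _ = C₃ ^ (-1 / γ) * (C₄ ^ θ + C₅ ^ θ * z ^ (1 - β / γ)) := by
        rw [hexp₁, hexp₂, rpow_zero, mul_one]

theorem stmt16 (β γ a₁ C₃ C₄ C₅ : ℝ) (hβ0 : 0 < β) (hβγ : β < γ) (hγ : γ < 1)
    (ha₁ : 0 < a₁) (hC₃ : 0 < C₃) (hC₄ : 0 < C₄) (hC₅ : 0 < C₅)
    (j : ℝ → ℝ) (hj : ∀ x > (0:ℝ), j x ≤ a₁ * x ^ (-1/γ))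
    (ψ : ℝ → ℝ → ℝ)
    (hψ : ∀ K > (0:ℝ), ∀ N > (0:ℝ),
      C₃ * (N/K) ^ β * (C₄ * (N/K) ^ (β-1) + C₅) ^ ((γ-β)/(β-1)) ≤ ψ K N) :
    ∃ b₇ > 0, ∀ K > (0:ℝ), ∀ N > (0:ℝ),
      j (ψ K N) * (N/K) ≤ b₇ + (N/K) ^ (1-β) := by
  have hγ0 : 0 < γ := hβ0.trans hβγ
  set θ := (γ - β) / (γ * (1 - β))
  set A := a₁ * C₃ ^ (-1 / γ) * C₄ ^ θ
  set M := a₁ * C₃ ^ (-1 / γ) * C₅ ^ θ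
  have hp : 0 < 1 - β / γ := sub_pos.2 ((div_lt_one hγ0).2 hβγ)
  have hpq : 1 - β / γ < 1 - β := by
    have : β < β / γ := (lt_div_iff₀ hγ0).2 (by nlinarith)
    linarith
  refine ⟨A + M ^ ((1 - β) / ((1 - β) - (1 - β / γ))), by positivity, fun K hK N hN ↦ ?_⟩
  set z := N / K
  have hz : 0 < z := div_pos hN hK
  have hψ0 : 0 < ψ K N := lt_of_lt_of_le (by positivity) (hψ K hK N hN)
  have hneg : -1 / γ ≤ 0 := div_nonpos_of_nonpos_of_nonneg (by norm_num) hγ0.le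
  calc j (ψ K N) * z ≤ a₁ * (z * ψ K N ^ (-1 / γ)) :=
        (mul_le_mul_of_nonneg_right (hj _ hψ0) hz.le).trans_eq (by ring)
    _ ≤ a₁ * (z * (C₃ * z ^ β * (C₄ * z ^ (β - 1) + C₅) ^ ((γ - β) / (β - 1))) ^ (-1 / γ)) := by
        gcongr a₁ * (z * ?_)
        exact rpow_le_rpow_of_nonpos (by positivity) (hψ K hK N hN) hneg
    _ ≤ a₁ * (C₃ ^ (-1 / γ) * (C₄ ^ θ + C₅ ^ θ * z ^ (1 - β / γ))) := by
        gcongr a₁ * ?_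
        exact mul_rpow_neg_inv_le hβ0 hβγ.le hγ hC₃ hC₄ hC₅ hz
    _ = A + M * z ^ (1 - β / γ) := by ring
    _ ≤ A + M ^ ((1 - β) / ((1 - β) - (1 - β / γ))) + z ^ (1 - β) := by
        rw [add_assoc]
        gcongr
        exact mul_rpow_le_rpow_add_rpow (by positivity) hz.le hp hpq
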